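/- Let F ∈ 𝒜 and K ∈ 𝒜⁰ with F ∩ K ≠ K and P^j_*(K) > 0. Then P_*(F|K) = min{ P^j_*(F∩K) / (P^j_*(F∩K) + U^j(F^c,K)) , L^j(F,K) / (L^j(F,K) + P^{j*}(F^c∩K)) }. -/

import Mathlib

open Set

open scoped Classical

variable {Ω : Type*}

/-- A field of sets on `Ω`: contains `univ`, closed under complements and finite unions. -/
def IsSetField (𝒜 : Set (Set Ω)) : Prop :=
  Set.univ ∈ 𝒜 ∧ (∀ A ∈ 𝒜, Aᶜ ∈ 𝒜) ∧ ∀ A ∈ 𝒜, ∀ B ∈ 𝒜, A ∪ B ∈ 𝒜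

/-- A finitely additive probability on the field `𝒜`. -/
def IsFAP (𝒜 : Set (Set Ω)) (P : Set Ω → ℝ) : Prop :=
  (∀ A ∈ 𝒜, 0 ≤ P A ∧ P A ≤ 1) ∧ P Set.univ = 1 ∧
    ∀ A ∈ 𝒜, ∀ B ∈ 𝒜, Disjoint A B → P (A ∪ B) = P A + P B

/-- A partition of `Ω` into nonempty pairwise disjoint pieces. -/
def IsPartition {ι : Type*} (H : ι → Set Ω) : Prop :=
  (∀ i, (H i).Nonempty) ∧ (Pairwise fun i j => Disjoint (H i) (H j)) ∧
    (⋃ i, H i) = Set.univ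

/-- A field containing every member of the partition `H` and whose members are
unions of members of the partition. -/
def IsFieldOver {ι : Type*} (H : ι → Set Ω) (𝒜L : Set (Set Ω)) : Prop :=
  IsSetField 𝒜L ∧ (∀ i, H i ∈ 𝒜L) ∧ ∀ A ∈ 𝒜L, ∃ S : Set ι, A = ⋃ i ∈ S, H i

/-- A field containing `𝒜L ∪ 𝒜E` whose members are unions of the atoms `H i ∩ E j`. -/
def IsJointField {ι κ : Type*} (H : ι → Set Ω) (E : κ → Set Ω)
    (𝒜L 𝒜E 𝒜 : Set (Set Ω)) : Prop :=
  IsSetField 𝒜 ∧ 𝒜L ⊆ 𝒜 ∧ 𝒜E ⊆ 𝒜 ∧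
    ∀ A ∈ 𝒜, ∃ S : Set (ι × κ), A = ⋃ p ∈ S, H p.1 ∩ E p.2

/-- A strategy on `𝒜 × ℒ`: each `σ (·|H i)` is a finitely additive probability on `𝒜`
equal to `1` on events implied by `H i`. -/
def IsStrategy {ι : Type*} (𝒜 : Set (Set Ω)) (H : ι → Set Ω) (σ : Set Ω → ι → ℝ) : Prop :=
  ∀ i, IsFAP 𝒜 (fun F => σ F i) ∧ ∀ F ∈ 𝒜, H i ⊆ F → σ F i = 1

/-- A full conditional probability on the field `𝒜` (conditions (C1), (C2), (C3)). -/
def IsFCP (𝒜 : Set (Set Ω)) (P : Set Ω → Set Ω → ℝ) : Prop :=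
  (∀ E ∈ 𝒜, ∀ K ∈ 𝒜, K.Nonempty → P E K = P (E ∩ K) K) ∧
  (∀ K ∈ 𝒜, K.Nonempty → IsFAP 𝒜 fun E => P E K) ∧
  ∀ E ∈ 𝒜, ∀ F ∈ 𝒜, ∀ K ∈ 𝒜, K.Nonempty → (E ∩ K).Nonempty →
    P (E ∩ F) K = P E K * P F (E ∩ K)

/-- `P` extends the prior `π` on `𝒜L` and the strategy `σ` on `𝒜 × ℒ`. -/
def ExtendsPriorStrategy {ι : Type*} (𝒜 𝒜L : Set (Set Ω)) (H : ι → Set Ω)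
    (π : Set Ω → ℝ) (σ : Set Ω → ι → ℝ) (P : Set Ω → Set Ω → ℝ) : Prop :=
  (∀ B ∈ 𝒜L, P B Set.univ = π B) ∧ ∀ F ∈ 𝒜, ∀ i, P F (H i) = σ F i

/-- The set `𝒫` of full conditional probabilities on `𝒜` extending `{π, σ}`. -/
def FCPSet {ι : Type*} (𝒜 𝒜L : Set (Set Ω)) (H : ι → Set Ω)
    (π : Set Ω → ℝ) (σ : Set Ω → ι → ℝ) : Set (Set Ω → Set Ω → ℝ) :=
  {P | IsFCP 𝒜 P ∧ ExtendsPriorStrategy 𝒜 𝒜L H π σ P}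

/-- Lower envelope of a set of conditional probabilities at `F|K`. -/
noncomputable def lowEnv (Ps : Set (Set Ω → Set Ω → ℝ)) (F K : Set Ω) : ℝ :=
  sInf ((fun P => P F K) '' Ps)

/-- Upper envelope of a set of conditional probabilities at `F|K`. -/
noncomputable def upEnv (Ps : Set (Set Ω → Set Ω → ℝ)) (F K : Set Ω) : ℝ :=
  sSup ((fun P => P F K) '' Ps)

/-- A finite partition of `Ω` contained in `𝒜L`. -/
def IsFinPart (𝒜L : Set (Set Ω)) (T : Finset (Set Ω)) : Prop :=
  (↑T : Set (Set Ω)) ⊆ 𝒜L ∧ (∀ A ∈ T, (A : Set Ω).Nonempty) ∧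
    (∀ A ∈ T, ∀ B ∈ T, A ≠ B → Disjoint A B) ∧ ⋃₀ (↑T : Set (Set Ω)) = Set.univ

/-- Lower Stieltjes integral of `X : ℒ → ℝ` with respect to `μ` on `𝒜L`. -/
noncomputable def lowerSInt {ι : Type*} (H : ι → Set Ω) (𝒜L : Set (Set Ω))
    (X : ι → ℝ) (μ : Set Ω → ℝ) : ℝ :=
  sSup {x | ∃ T : Finset (Set Ω), IsFinPart 𝒜L T ∧
    x = ∑ A ∈ T, sInf {y | ∃ i, H i ⊆ A ∧ y = X i} * μ A}

/-- Upper Stieltjes integral of `X : ℒ → ℝ` with respect to `μ` on `𝒜L`. -/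
noncomputable def upperSInt {ι : Type*} (H : ι → Set Ω) (𝒜L : Set (Set Ω))
    (X : ι → ℝ) (μ : Set Ω → ℝ) : ℝ :=
  sInf {x | ∃ T : Finset (Set Ω), IsFinPart 𝒜L T ∧
    x = ∑ A ∈ T, sSup {y | ∃ i, H i ⊆ A ∧ y = X i} * μ A}

/-- `𝒜L`-continuity of a bounded function `X : ℒ → ℝ`. -/
def ALContinuous {ι : Type*} (H : ι → Set Ω) (𝒜L : Set (Set Ω)) (X : ι → ℝ) : Prop :=
  (∃ M : ℝ, ∀ i, |X i| ≤ M) ∧ ∀ t : ℝ, ∀ ε > (0 : ℝ), ∃ A ∈ 𝒜L,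
    (⋃ i ∈ {i | t + ε ≤ X i}, H i) ⊆ A ∧ A ⊆ ⋃ i ∈ {i | t ≤ X i}, H i

/-- Countable additivity of `P` on the field `𝒜`. -/
def CountablyAdditiveOn (𝒜 : Set (Set Ω)) (P : Set Ω → ℝ) : Prop :=
  ∀ A : ℕ → Set Ω, (∀ n, A n ∈ 𝒜) → (Pairwise fun m n => Disjoint (A m) (A n)) →
    (⋃ n, A n) ∈ 𝒜 → HasSum (fun n => P (A n)) (P (⋃ n, A n))

/-- A (normalized) capacity on the field `𝒜`. -/
def IsCapacity (𝒜 : Set (Set Ω)) (φ : Set Ω → ℝ) : Prop :=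
  φ ∅ = 0 ∧ φ Set.univ = 1 ∧ (∀ A ∈ 𝒜, 0 ≤ φ A ∧ φ A ≤ 1) ∧
    ∀ A ∈ 𝒜, ∀ B ∈ 𝒜, A ⊆ B → φ A ≤ φ B

/-- Total monotonicity of a capacity `φ` on the field `𝒜`. -/
def TotallyMonotone (𝒜 : Set (Set Ω)) (φ : Set Ω → ℝ) : Prop :=
  ∀ n : ℕ, 2 ≤ n → ∀ A : Fin n → Set Ω, (∀ i, A i ∈ 𝒜) →
    ∑ s ∈ Finset.univ.powerset.filter (fun s : Finset (Fin n) => s.Nonempty),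
      (-1 : ℝ) ^ (s.card - 1) * φ (⋂ i ∈ s, A i) ≤ φ (⋃ i, A i)

/-- Restriction of a conditional probability to the domain `𝒜 × ℬ⁰`, viewed as a point
of the product space `ℝ^(𝒜 × ℬ⁰)`. -/
def restrictPairs (𝒜 ℬ : Set (Set Ω)) (Q : Set Ω → Set Ω → ℝ)
    (p : {p : Set Ω × Set Ω // p.1 ∈ 𝒜 ∧ p.2 ∈ ℬ ∧ p.2.Nonempty}) : ℝ :=
  Q p.val.1 p.val.2

/-- Restriction of a set function to the domain `𝒜`, viewed as a point of `ℝ^𝒜`. -/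
def restrictDom (𝒜 : Set (Set Ω)) (μ : Set Ω → ℝ) (A : {A : Set Ω // A ∈ 𝒜}) : ℝ :=
  μ A.val

/-- The field of all unions of members of the partition `H`, i.e. `⟨ℒ⟩*`. -/
def unionsOf {ι : Type*} (H : ι → Set Ω) : Set (Set Ω) :=
  {A | ∃ S : Set ι, A = ⋃ i ∈ S, H i}

/-- The set `𝒬^fd` of fully ℒ-disintegrable full conditional probabilities on `𝒜`
extending `{π, σ}`. -/
def QfdSet {ι : Type*} (𝒜 𝒜L : Set (Set Ω)) (H : ι → Set Ω)
    (π : Set Ω → ℝ) (σ : Set Ω → ι → ℝ) : Set (Set Ω → Set Ω → ℝ) :=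
  {Q | IsFCP 𝒜 Q ∧ ExtendsPriorStrategy 𝒜 𝒜L H π σ Q ∧
    ∀ F ∈ 𝒜, ∀ K ∈ 𝒜L, K.Nonempty →
      Q F K = lowerSInt H 𝒜L (fun i => σ F i) fun B => Q B K}

/-- The set `𝒬^fsc` of fully strongly ℒ-conglomerable full conditional probabilities
on `𝒜` extending `{π, σ}`. -/
def QfscSet {ι : Type*} (𝒜 𝒜L : Set (Set Ω)) (H : ι → Set Ω)
    (π : Set Ω → ℝ) (σ : Set Ω → ι → ℝ) : Set (Set Ω → Set Ω → ℝ) :=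
  {Q | IsFCP 𝒜 Q ∧ ExtendsPriorStrategy 𝒜 𝒜L H π σ Q ∧
    ∀ F ∈ 𝒜, ∀ K ∈ 𝒜L, K.Nonempty → ∀ B ∈ 𝒜L, B.Nonempty → B ⊆ K →
      Q B K * sInf {x | ∃ i, H i ⊆ B ∧ x = σ F i} ≤ Q (F ∩ B) K ∧
      Q (F ∩ B) K ≤ Q B K * sSup {x | ∃ i, H i ⊆ B ∧ x = σ F i}}

/-- The set `𝒫^sc` of strongly ℒ-conglomerable joint probabilities consistent with `{π, σ}`. -/
def PscSet {ι : Type*} (𝒜 𝒜L : Set (Set Ω)) (H : ι → Set Ω)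
    (π : Set Ω → ℝ) (σ : Set Ω → ι → ℝ) : Set (Set Ω → ℝ) :=
  {μ | (∃ P ∈ FCPSet 𝒜 𝒜L H π σ, μ = fun F => P F Set.univ) ∧
    ∀ F ∈ 𝒜, ∀ B ∈ 𝒜L, B.Nonempty →
      π B * sInf {x | ∃ i, H i ⊆ B ∧ x = σ F i} ≤ μ (F ∩ B) ∧
      μ (F ∩ B) ≤ π B * sSup {x | ∃ i, H i ⊆ B ∧ x = σ F i}}

/-- The set `𝒫^fd` of fully ℒ-disintegrable conditional probabilities on `𝒜 × 𝒜L⁰`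
extending `{π, σ}`. -/
def PfdSet {ι : Type*} (𝒜 𝒜L : Set (Set Ω)) (H : ι → Set Ω)
    (π : Set Ω → ℝ) (σ : Set Ω → ι → ℝ) : Set (Set Ω → Set Ω → ℝ) :=
  {P | (∀ E ∈ 𝒜, ∀ K ∈ 𝒜L, K.Nonempty → P E K = P (E ∩ K) K) ∧
    (∀ K ∈ 𝒜L, K.Nonempty → IsFAP 𝒜 fun E => P E K) ∧
    (∀ E ∈ 𝒜, ∀ F ∈ 𝒜, ∀ K ∈ 𝒜L, K.Nonempty → E ∩ K ∈ 𝒜L → (E ∩ K).Nonempty →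
      P (E ∩ F) K = P E K * P F (E ∩ K)) ∧
    (∀ B ∈ 𝒜L, P B Set.univ = π B) ∧ (∀ F ∈ 𝒜, ∀ i, P F (H i) = σ F i) ∧
    ∀ F ∈ 𝒜, ∀ K ∈ 𝒜L, K.Nonempty →
      P F K = lowerSInt H 𝒜L (fun i => σ F i) fun B => P B K}

/-- The Choquet integral `C∫ X dφ = ∫₀¹ φ₊((X ≥ t)) dt` of a `[0,1]`-valued `X : ℒ → ℝ`
with respect to a capacity `φ` on `𝒜L`, where `φ₊` is the inner extension of `φ`. -/
noncomputable def choquetInt {ι : Type*} (H : ι → Set Ω) (𝒜L : Set (Set Ω))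
    (X : ι → ℝ) (φ : Set Ω → ℝ) : ℝ :=
  ∫ t in (0 : ℝ)..(1 : ℝ),
    sSup {y | ∃ B ∈ 𝒜L, B ⊆ (⋃ i ∈ {i | t ≤ X i}, H i) ∧ y = φ B}

/-- `L^j(F,K)`: minimum of `μ(F ∩ K)` over joint probabilities in `𝒫^j` attaining the
upper envelope at `F^c ∩ K`. -/
noncomputable def Lj {Ω : Type*} (Ps : Set (Set Ω → Set Ω → ℝ)) (F K : Set Ω) : ℝ :=
  sInf {x | ∃ P ∈ Ps, P (Fᶜ ∩ K) Set.univ = upEnv Ps (Fᶜ ∩ K) Set.univ ∧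
    x = P (F ∩ K) Set.univ}

/-- `U^j(F,K)`: maximum of `μ(F ∩ K)` over joint probabilities in `𝒫^j` attaining the
lower envelope at `F^c ∩ K`. -/
noncomputable def Uj {Ω : Type*} (Ps : Set (Set Ω → Set Ω → ℝ)) (F K : Set Ω) : ℝ :=
  sSup {x | ∃ P ∈ Ps, P (Fᶜ ∩ K) Set.univ = lowEnv Ps (Fᶜ ∩ K) Set.univ ∧
    x = P (F ∩ K) Set.univ}

/-!
Every `P ∈ 𝒫` has a joint probability `P(·|Ω)` compatible with `{π, σ}` (`ℒ`-marginal `π`,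
disintegration `σ` along `ℒ`), and conversely every compatible joint probability `ν` is `P(·|Ω)`
for some `P ∈ 𝒫`: condition lexicographically on `ν`, then on the `σ(·|H i)`, then on point
masses. By compactness (an ultrafilter limit over finite `𝒜_ℒ`-partitions, where each block that
is not a cell carries a point mass placed in `Fᶜ ∩ K` if possible and outside `F ∩ K` otherwise)
some compatible `ν` minimises `ν(F ∩ K)` and maximises `ν(Fᶜ ∩ K)` simultaneously. Its extension
`P₀` attains `P^j_*(F ∩ K)`, `P^{j*}(Fᶜ ∩ K)`, `L^j(F,K)` and `U^j(Fᶜ,K)`, so both terms of the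
minimum equal `a / (a + b)` with `a = P₀(F ∩ K|Ω)`, `b = P₀(Fᶜ ∩ K|Ω)`. Finally every `P ∈ 𝒫`
has `P(F|K) = x / (x + y)` with `x = P(F ∩ K|Ω) ≥ a` and `y = P(Fᶜ ∩ K|Ω) ≤ b`, hence
`P(F|K) ≥ a / (a + b) = P₀(F|K)`.
-/

open Filter Topology

theorem IsSetField.isSetAlgebra {𝒜 : Set (Set Ω)} (h : IsSetField 𝒜) :
    MeasureTheory.IsSetAlgebra 𝒜 where
  empty_mem := by simpa using h.2.1 _ h.1
  compl_mem _ hs := h.2.1 _ hs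
  union_mem _ _ hs ht := h.2.2 _ hs _ ht

namespace IsFAP

variable {𝒜 : Set (Set Ω)} {μ : Set Ω → ℝ} {A B G : Set Ω}

theorem nonneg (hμ : IsFAP 𝒜 μ) (hA : A ∈ 𝒜) : 0 ≤ μ A := (hμ.1 A hA).1

theorem le_one (hμ : IsFAP 𝒜 μ) (hA : A ∈ 𝒜) : μ A ≤ 1 := (hμ.1 A hA).2

theorem union (hμ : IsFAP 𝒜 μ) (hA : A ∈ 𝒜) (hB : B ∈ 𝒜) (hAB : Disjoint A B) :
    μ (A ∪ B) = μ A + μ B :=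
  hμ.2.2 A hA B hB hAB

variable (h𝒜 : IsSetField 𝒜)
include h𝒜

theorem empty (hμ : IsFAP 𝒜 μ) : μ ∅ = 0 := by
  have hempty := h𝒜.isSetAlgebra.empty_mem
  have := hμ.union hempty hempty (disjoint_empty ∅)
  rw [union_empty] at this
  linarith

noncomputable def toAddContent (hμ : IsFAP 𝒜 μ) : MeasureTheory.AddContent ℝ 𝒜 :=
  h𝒜.isSetAlgebra.isSetRing.addContent_of_union μ (hμ.empty h𝒜) fun hs ht => hμ.union hs ht

theorem biUnion_eq_sum {γ : Type*} (hμ : IsFAP 𝒜 μ) {S : Finset γ} {s : γ → Set Ω}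
    (hs : ∀ c ∈ S, s c ∈ 𝒜) (hS : (S : Set γ).PairwiseDisjoint s) :
    μ (⋃ c ∈ S, s c) = ∑ c ∈ S, μ (s c) :=
  MeasureTheory.addContent_biUnion_eq (m := hμ.toAddContent h𝒜) h𝒜.isSetAlgebra.isSetRing hs hS

theorem mono (hμ : IsFAP 𝒜 μ) (hA : A ∈ 𝒜) (hB : B ∈ 𝒜) (hAB : A ⊆ B) : μ A ≤ μ B := by
  have hBA := h𝒜.isSetAlgebra.sdiff_mem hB hA
  rw [← union_sdiff_cancel hAB, hμ.union hA hBA disjoint_sdiff_right]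
  linarith [hμ.nonneg hBA]

theorem eq_one_of_subset (hμ : IsFAP 𝒜 μ) (hA : A ∈ 𝒜) (hB : B ∈ 𝒜) (hA1 : μ A = 1)
    (hAB : A ⊆ B) : μ B = 1 :=
  le_antisymm (hμ.le_one hB) (hA1 ▸ hμ.mono h𝒜 hA hB hAB)

theorem eq_zero_of_disjoint (hμ : IsFAP 𝒜 μ) (hA : A ∈ 𝒜) (hG : G ∈ 𝒜) (hA1 : μ A = 1)
    (hGA : Disjoint G A) : μ G = 0 := by
  have := hμ.union hG hA hGA
  linarith [hμ.le_one (h𝒜.2.2 _ hG _ hA), hμ.nonneg hG]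

theorem inter_eq_of_eq_one (hμ : IsFAP 𝒜 μ) (hA : A ∈ 𝒜) (hG : G ∈ 𝒜) (hA1 : μ A = 1) :
    μ (G ∩ A) = μ G := by
  have hGA := h𝒜.isSetAlgebra.inter_mem hG hA
  have hGmA := h𝒜.isSetAlgebra.sdiff_mem hG hA
  conv_rhs => rw [← inter_union_sdiff G A]
  rw [hμ.union hGA hGmA disjoint_sdiff_inter.symm,
    hμ.eq_zero_of_disjoint h𝒜 hA hGmA hA1 disjoint_sdiff_left, add_zero]

theorem cond (hμ : IsFAP 𝒜 μ) {C : Set Ω} (hC : C ∈ 𝒜) (hpos : 0 < μ C) :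
    IsFAP 𝒜 fun E => μ (E ∩ C) / μ C := by
  refine ⟨fun E hE => ⟨?_, ?_⟩, by simp [div_self hpos.ne'], fun E hE E' hE' hd => ?_⟩
  · exact div_nonneg (hμ.nonneg (h𝒜.isSetAlgebra.inter_mem hE hC)) hpos.le
  · exact div_le_one_of_le₀ (hμ.mono h𝒜 (h𝒜.isSetAlgebra.inter_mem hE hC) hC inter_subset_right)
      hpos.le
  · dsimp only
    rw [union_inter_distrib_right, hμ.union (h𝒜.isSetAlgebra.inter_mem hE hC)
      (h𝒜.isSetAlgebra.inter_mem hE' hC) (hd.mono inter_subset_left inter_subset_left), add_div]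

end IsFAP

theorem isFAP_indicator_one (𝒜 : Set (Set Ω)) (ω : Ω) :
    IsFAP 𝒜 fun G => G.indicator 1 ω := by
  refine ⟨fun G _ => ⟨?_, ?_⟩, by simp, fun A _ B _ hd =>
    congrFun (indicator_union_of_disjoint hd _) ω⟩ <;> by_cases hω : ω ∈ G <;> simp [hω]

theorem isFAP_sum_mul {β : Type*} {𝒜 : Set (Set Ω)} {T : Finset β} {w : β → ℝ}
    {μ : β → Set Ω → ℝ} (hw : ∀ b ∈ T, 0 ≤ w b) (hw1 : ∑ b ∈ T, w b = 1)
    (hμ : ∀ b ∈ T, IsFAP 𝒜 (μ b)) : IsFAP 𝒜 fun G => ∑ b ∈ T, w b * μ b G := by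
  refine ⟨fun G hG => ⟨?_, ?_⟩, ?_, fun A hA B hB hd => ?_⟩
  · exact Finset.sum_nonneg fun b hb => mul_nonneg (hw b hb) ((hμ b hb).nonneg hG)
  · calc ∑ b ∈ T, w b * μ b G ≤ ∑ b ∈ T, w b * 1 :=
          Finset.sum_le_sum fun b hb => mul_le_mul_of_nonneg_left ((hμ b hb).le_one hG) (hw b hb)
      _ = 1 := by simpa using hw1
  · show ∑ b ∈ T, w b * μ b univ = 1
    rw [Finset.sum_congr rfl fun b hb => by rw [(hμ b hb).2.1, mul_one], hw1]
  · simp only [← Finset.sum_add_distrib, ← mul_add]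
    exact Finset.sum_congr rfl fun b hb => by rw [(hμ b hb).union hA hB hd]

theorem IsFAP.of_tendsto {β : Type*} {𝒜 : Set (Set Ω)} {l : Filter β} [l.NeBot]
    {μs : β → Set Ω → ℝ} {μ : Set Ω → ℝ} (hμs : ∀ b, IsFAP 𝒜 (μs b))
    (hlim : ∀ G ∈ 𝒜, Tendsto (fun b => μs b G) l (𝓝 (μ G))) (h𝒜 : IsSetField 𝒜) :
    IsFAP 𝒜 μ := by
  refine ⟨fun G hG => ⟨?_, ?_⟩, ?_, fun A hA B hB hd => ?_⟩
  · exact ge_of_tendsto' (hlim G hG) fun b => (hμs b).nonneg hG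
  · exact le_of_tendsto' (hlim G hG) fun b => (hμs b).le_one hG
  · exact tendsto_nhds_unique (hlim _ h𝒜.1) (by simp [fun b => (hμs b).2.1])
  · refine tendsto_nhds_unique (hlim _ (h𝒜.2.2 A hA B hB)) ?_
    simpa only [fun b => (hμs b).union hA hB hd] using (hlim A hA).add (hlim B hB)

theorem tendsto_limUnder_of_forall_mem {β X : Type*} [TopologicalSpace X] [Nonempty X]
    (𝓤 : Ultrafilter β) {s : Set X} (hs : IsCompact s) {f : β → X} (hf : ∀ b, f b ∈ s) :
    Tendsto f 𝓤 (𝓝 (limUnder (𝓤 : Filter β) f)) := by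
  obtain ⟨x, -, hx⟩ := hs.ultrafilter_le_nhds (𝓤.map f)
    (by rw [Ultrafilter.coe_map, le_principal_iff]; exact univ_mem' (s := f ⁻¹' s) hf)
  exact tendsto_nhds_limUnder ⟨x, hx⟩

section Lexicographic

variable {α : Type*} (r : α → α → Prop) [IsWellOrder α r] {𝒜 : Set (Set Ω)}
  {μ : α → Set Ω → ℝ}

/-- Condition on `C` with the `r`-first layer charging `C` (junk value `0` if none does). -/
noncomputable def lexCond (μ : α → Set Ω → ℝ) (E C : Set Ω) : ℝ :=
  if h : ∃ a, 0 < μ a C then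
    let a := (IsWellFounded.wf (r := r)).min {a | 0 < μ a C} h
    μ a (E ∩ C) / μ a C
  else 0

variable {r}

theorem lexCond_eq {a : α} {C : Set Ω} (ha : 0 < μ a C) (hbelow : ∀ b, r b a → μ b C ≤ 0)
    (E : Set Ω) : lexCond r μ E C = μ a (E ∩ C) / μ a C := by
  have h : ∃ a, 0 < μ a C := ⟨a, ha⟩
  have hmin : (IsWellFounded.wf (r := r)).min {a | 0 < μ a C} h = a :=
    IsWellFounded.wf.min_eq_of_forall_not_lt (s := {a | 0 < μ a C}) ha fun b hb hba =>
      (hbelow b hba).not_gt hb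
  rw [lexCond, dif_pos h, hmin]

theorem exists_first_layer {C : Set Ω} (h : ∃ a, 0 < μ a C) :
    ∃ a, 0 < μ a C ∧ ∀ b, r b a → μ b C ≤ 0 := by
  obtain ⟨a, ha, hmin⟩ := (IsWellFounded.wf (r := r)).has_min {a | 0 < μ a C} h
  exact ⟨a, ha, fun b hb => not_lt.mp fun hpos => hmin b hpos hb⟩

theorem isFCP_lexCond (h𝒜 : IsSetField 𝒜) (hμ : ∀ a, IsFAP 𝒜 (μ a))
    (hcover : ∀ C ∈ 𝒜, C.Nonempty → ∃ a, 0 < μ a C) : IsFCP 𝒜 (lexCond r μ) := by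
  refine ⟨fun E _ C _ _ => by simp only [lexCond, inter_assoc, inter_self], fun C hC hCne => ?_,
    fun E hE F hF C hC hCne _ => ?_⟩
  · obtain ⟨a, ha, hbelow⟩ := exists_first_layer (r := r) (hcover C hC hCne)
    simpa only [lexCond_eq ha hbelow] using (hμ a).cond h𝒜 hC ha
  obtain ⟨a, ha, hbelow⟩ := exists_first_layer (r := r) (hcover C hC hCne)
  have hEC := h𝒜.isSetAlgebra.inter_mem hE hC
  have hEFC : E ∩ F ∩ C = F ∩ (E ∩ C) := by rw [inter_comm E F, inter_assoc]
  rw [lexCond_eq ha hbelow, lexCond_eq ha hbelow, hEFC]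
  rcases (hμ a).nonneg hEC |>.lt_or_eq with hpos | hzero
  · -- `a` is also the first layer charging `E ∩ C`
    have hbelow' : ∀ b, r b a → μ b (E ∩ C) ≤ 0 := fun b hb =>
      ((hμ b).mono h𝒜 hEC hC inter_subset_right).trans (hbelow b hb)
    rw [lexCond_eq hpos hbelow']
    field_simp
  · have hFEC : μ a (F ∩ (E ∩ C)) = 0 := le_antisymm
      (hzero ▸ (hμ a).mono h𝒜 (h𝒜.isSetAlgebra.inter_mem hF hEC) hEC inter_subset_right)
      ((hμ a).nonneg (h𝒜.isSetAlgebra.inter_mem hF hEC))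
    rw [hFEC, ← hzero]
    simp

end Lexicographic

section JointExtension

variable {ι : Type*} {𝒜 𝒜L : Set (Set Ω)} {H : ι → Set Ω} {π : Set Ω → ℝ}
  {σ : Set Ω → ι → ℝ}

theorem IsPartition.injective (hH : IsPartition H) : Function.Injective H := fun i j hij => by
  by_contra hne
  obtain ⟨x, hx⟩ := hH.1 i
  exact Set.disjoint_left.mp (hH.2.1 hne) hx (hij ▸ hx)

namespace IsStrategy

variable (hσ : IsStrategy 𝒜 H σ) (hcell : ∀ i, H i ∈ 𝒜)
include hσ hcell

theorem cell_eq_one (i : ι) : σ (H i) i = 1 := (hσ i).2 _ (hcell i) subset_rfl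

theorem cell_eq_zero (h𝒜 : IsSetField 𝒜) (hH : IsPartition H) {i j : ι} (hij : i ≠ j) :
    σ (H j) i = 0 :=
  (hσ i).1.eq_zero_of_disjoint h𝒜 (hcell i) (hcell j) (hσ.cell_eq_one hcell i) (hH.2.1 hij.symm)

theorem inter_cell (h𝒜 : IsSetField 𝒜) {G : Set Ω} (hG : G ∈ 𝒜) (i : ι) :
    σ (G ∩ H i) i = σ G i :=
  (hσ i).1.inter_eq_of_eq_one h𝒜 (hcell i) hG (hσ.cell_eq_one hcell i)

end IsStrategy

/-- The joint probabilities compatible with `{π, σ}`; they are exactly the members of `𝒫^j`. -/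
structure IsJointExtension (𝒜 𝒜L : Set (Set Ω)) (H : ι → Set Ω) (π : Set Ω → ℝ)
    (σ : Set Ω → ι → ℝ) (μ : Set Ω → ℝ) : Prop where
  isFAP : IsFAP 𝒜 μ
  eq_prior : ∀ B ∈ 𝒜L, μ B = π B
  inter_cell : ∀ G ∈ 𝒜, ∀ i, μ (G ∩ H i) = π (H i) * σ G i

theorem isJointExtension_of_mem_FCPSet [Nonempty Ω] (hH : IsPartition H) (h𝒜L : IsFieldOver H 𝒜L)
    (h𝒜 : IsSetField 𝒜) (hL : 𝒜L ⊆ 𝒜) {P : Set Ω → Set Ω → ℝ}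
    (hP : P ∈ FCPSet 𝒜 𝒜L H π σ) : IsJointExtension 𝒜 𝒜L H π σ fun G => P G univ := by
  obtain ⟨⟨-, hC2, hC3⟩, hprior, hstrat⟩ := hP
  refine ⟨hC2 _ h𝒜.1 univ_nonempty, hprior, fun G hG i => ?_⟩
  have hchain := hC3 (H i) (hL (h𝒜L.2.1 i)) G hG univ h𝒜.1 univ_nonempty
    (by simpa using hH.1 i)
  rw [inter_univ] at hchain
  rw [inter_comm, hchain, hstrat G hG, hprior _ (h𝒜L.2.1 i)]

noncomputable def jointLayers (σ : Set Ω → ι → ℝ) (ν : Set Ω → ℝ) : Unit ⊕ ι ⊕ Ω → Set Ω → ℝ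
  | .inl _ => ν
  | .inr (.inl i) => fun G => σ G i
  | .inr (.inr ω) => fun G => G.indicator 1 ω

/-- Only the order of the three kinds of layers matters; the well-orders on `ι` and `Ω` are
arbitrary. -/
noncomputable def lexExtension (σ : Set Ω → ι → ℝ) (ν : Set Ω → ℝ) : Set Ω → Set Ω → ℝ :=
  lexCond (Sum.Lex emptyRelation (Sum.Lex WellOrderingRel WellOrderingRel)) (jointLayers σ ν)

theorem exists_mem_FCPSet_of_isJointExtension (hH : IsPartition H) (h𝒜L : IsFieldOver H 𝒜L)
    (h𝒜 : IsSetField 𝒜) (hL : 𝒜L ⊆ 𝒜) (hσ : IsStrategy 𝒜 H σ) {ν : Set Ω → ℝ}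
    (hν : IsJointExtension 𝒜 𝒜L H π σ ν) :
    ∃ P ∈ FCPSet 𝒜 𝒜L H π σ, ∀ G, P G univ = ν G := by
  have hcell : ∀ i, H i ∈ 𝒜 := fun i => hL (h𝒜L.2.1 i)
  have hlayers : ∀ a, IsFAP 𝒜 (jointLayers σ ν a)
    | .inl _ => hν.isFAP
    | .inr (.inl i) => (hσ i).1
    | .inr (.inr ω) => isFAP_indicator_one 𝒜 ω
  have hcover (C : Set Ω) (_ : C ∈ 𝒜) : C.Nonempty → ∃ a, 0 < jointLayers σ ν a C :=
    fun ⟨ω, hω⟩ => ⟨.inr (.inr ω), by simp [jointLayers, hω]⟩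
  have hν1 : 0 < ν univ := by rw [hν.isFAP.2.1]; exact one_pos
  have hjoint (G : Set Ω) : lexExtension σ ν G univ = ν G := by
    rw [lexExtension, lexCond_eq (a := Sum.inl ()) hν1 fun b hb => by cases hb; contradiction]
    simp [jointLayers, hν.isFAP.2.1]
  refine ⟨lexExtension σ ν, ⟨isFCP_lexCond h𝒜 hlayers hcover,
    fun B hB => (hjoint B).trans (hν.eq_prior B hB), fun G hG i => ?_⟩, hjoint⟩
  have hνcell : ν (H i) = π (H i) := hν.eq_prior _ (h𝒜L.2.1 i)
  rcases (hν.isFAP.nonneg (hcell i)).lt_or_eq with hpos | hzero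
  · rw [lexExtension, lexCond_eq (a := Sum.inl ()) hpos fun b hb => by cases hb; contradiction]
    change ν (G ∩ H i) / ν (H i) = σ G i
    rw [hν.inter_cell G hG i, hνcell, mul_div_cancel_left₀ _ (hνcell ▸ hpos.ne')]
  -- on a `ν`-null cell `H i`, the first layer charging it is `σ (·|H i)`
  have hbelow (b) (hb : Sum.Lex emptyRelation (Sum.Lex WellOrderingRel WellOrderingRel) b
      (.inr (.inl i))) : jointLayers σ ν b (H i) ≤ 0 := by
    cases hb with
    | inr hb => cases hb with
      | inl hji => exact (hσ.cell_eq_zero hcell h𝒜 hH (ne_of_irrefl hji)).le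
    | sep => exact hzero.ge
  rw [lexExtension,
    lexCond_eq (a := Sum.inr (.inl i)) (by simp [jointLayers, hσ.cell_eq_one hcell]) hbelow]
  simp [jointLayers, hσ.inter_cell hcell h𝒜 hG, hσ.cell_eq_one hcell]

end JointExtension

section FinitePartitions

variable {ι : Type*} {𝒜 𝒜L : Set (Set Ω)} {H : ι → Set Ω} {π : Set Ω → ℝ}
  {σ : Set Ω → ι → ℝ}

theorem IsFieldOver.eq_cell_of_subset (hH : IsPartition H) (h𝒜L : IsFieldOver H 𝒜L)
    {B : Set Ω} (hB : B ∈ 𝒜L) (hne : B.Nonempty) {i : ι} (hBi : B ⊆ H i) : B = H i := by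
  obtain ⟨S, rfl⟩ := h𝒜L.2.2 B hB
  obtain ⟨x, hx⟩ := hne
  obtain ⟨j, hj, hxj⟩ := mem_iUnion₂.mp hx
  obtain rfl : j = i := by
    by_contra hji
    exact Set.disjoint_left.mp (hH.2.1 hji) hxj (hBi hx)
  exact hBi.antisymm (subset_biUnion_of_mem hj)

namespace IsFinPart

variable {T : Finset (Set Ω)}

theorem exists_mem (hT : IsFinPart 𝒜L T) (x : Ω) : ∃ B ∈ T, x ∈ B := by
  have hx : x ∈ ⋃₀ (T : Set (Set Ω)) := by rw [hT.2.2.2]; trivial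
  simpa using hx

theorem sum_inter {μ : Set Ω → ℝ} (hT : IsFinPart 𝒜L T) (h𝒜 : IsSetField 𝒜) (hL : 𝒜L ⊆ 𝒜)
    (hμ : IsFAP 𝒜 μ) {X : Set Ω} (hX : X ∈ 𝒜) : ∑ B ∈ T, μ (X ∩ B) = μ X := by
  rw [← hμ.biUnion_eq_sum h𝒜 (fun B hB => h𝒜.isSetAlgebra.inter_mem hX (hL (hT.1 hB)))
    fun A hA B hB hAB => (hT.2.2.1 A hA B hB hAB).mono inter_subset_right inter_subset_right,
    ← inter_iUnion₂]
  congr 1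
  exact inter_eq_left.mpr fun x _ =>
    let ⟨B, hB, hxB⟩ := hT.exists_mem x
    mem_iUnion₂.mpr ⟨B, hB, hxB⟩

theorem pair (hL : IsSetField 𝒜L) {B : Set Ω} (hB : B ∈ 𝒜L) :
    IsFinPart 𝒜L (({B, Bᶜ} : Finset (Set Ω)).filter Set.Nonempty) := by
  simp only [IsFinPart, Finset.coe_filter, Finset.mem_filter, Finset.mem_insert,
    Finset.mem_singleton]
  refine ⟨?_, fun A hA => hA.2, ?_, ?_⟩
  · rintro A ⟨rfl | rfl, -⟩
    exacts [hB, hL.2.1 _ hB]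
  · rintro A ⟨rfl | rfl, -⟩ A' ⟨rfl | rfl, -⟩ hne <;>
      first | exact absurd rfl hne | exact disjoint_compl_right | exact disjoint_compl_left
  · refine eq_univ_of_forall fun x => ?_
    by_cases hx : x ∈ B
    · exact ⟨B, ⟨Or.inl rfl, x, hx⟩, hx⟩
    · exact ⟨Bᶜ, ⟨Or.inr rfl, x, hx⟩, hx⟩

theorem inf (hL : IsSetField 𝒜L) {T' : Finset (Set Ω)} (hT : IsFinPart 𝒜L T)
    (hT' : IsFinPart 𝒜L T') :
    IsFinPart 𝒜L (((T ×ˢ T').image fun p => p.1 ∩ p.2).filter Set.Nonempty) := by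
  simp only [IsFinPart, Finset.coe_filter, Finset.mem_filter, Finset.mem_image,
    Finset.mem_product]
  refine ⟨?_, fun A hA => hA.2, ?_, ?_⟩
  · rintro _ ⟨⟨⟨A, A'⟩, ⟨hA, hA'⟩, rfl⟩, -⟩
    exact hL.isSetAlgebra.inter_mem (hT.1 hA) (hT'.1 hA')
  · rintro _ ⟨⟨⟨A, A'⟩, ⟨hA, hA'⟩, rfl⟩, -⟩ _ ⟨⟨⟨B, B'⟩, ⟨hB, hB'⟩, rfl⟩, -⟩ hne
    by_cases h : A = B
    · refine (hT'.2.2.1 A' hA' B' hB' fun h' => hne ?_).mono inter_subset_right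
        inter_subset_right
      rw [h, h']
    · exact (hT.2.2.1 A hA B hB h).mono inter_subset_left inter_subset_left
  · refine eq_univ_of_forall fun x => ?_
    obtain ⟨A, hA, hxA⟩ := hT.exists_mem x
    obtain ⟨A', hA', hxA'⟩ := hT'.exists_mem x
    exact ⟨A ∩ A', ⟨⟨⟨A, A'⟩, ⟨hA, hA'⟩, rfl⟩, x, hxA, hxA'⟩, hxA, hxA'⟩

end IsFinPart

def FinPart (𝒜L : Set (Set Ω)) : Type _ := {T : Finset (Set Ω) // IsFinPart 𝒜L T}

namespace FinPart

instance : Preorder (FinPart 𝒜L) where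
  le T T' := ∀ B ∈ T'.1, ∃ A ∈ T.1, B ⊆ A
  le_refl _ B hB := ⟨B, hB, subset_rfl⟩
  le_trans _ _ _ h h' B hB :=
    let ⟨A, hA, hBA⟩ := h' B hB
    let ⟨A', hA', hAA'⟩ := h A hA
    ⟨A', hA', hBA.trans hAA'⟩

theorem nonempty [Nonempty Ω] (hL : IsSetField 𝒜L) : Nonempty (FinPart 𝒜L) :=
  ⟨⟨{univ}, by simp [IsFinPart, hL.1, univ_nonempty]⟩⟩

theorem isDirected (hL : IsSetField 𝒜L) : IsDirected (FinPart 𝒜L) (· ≤ ·) where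
  directed T T' := by
    refine ⟨⟨_, T.2.inf hL T'.2⟩, ?_, ?_⟩ <;>
    · intro B hB
      simp only [Finset.mem_filter, Finset.mem_image, Finset.mem_product] at hB
      obtain ⟨⟨⟨A, A'⟩, ⟨hA, hA'⟩, rfl⟩, -⟩ := hB
      first | exact ⟨A, hA, inter_subset_left⟩ | exact ⟨A', hA', inter_subset_right⟩

theorem eventually_subset_or_subset_compl (hL : IsSetField 𝒜L) {B : Set Ω} (hB : B ∈ 𝒜L) :
    ∀ᶠ T : FinPart 𝒜L in atTop, ∀ A ∈ T.1, A ⊆ B ∨ A ⊆ Bᶜ := by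
  filter_upwards [eventually_ge_atTop (α := FinPart 𝒜L) ⟨_, IsFinPart.pair hL hB⟩]
    with T hT A hA
  obtain ⟨A', hA', hAA'⟩ := hT A hA
  simp only [Finset.mem_filter, Finset.mem_insert, Finset.mem_singleton] at hA'
  rcases hA'.1 with rfl | rfl
  exacts [Or.inl hAA', Or.inr hAA']

theorem eventually_cell_mem (hH : IsPartition H) (h𝒜L : IsFieldOver H 𝒜L) (i : ι) :
    ∀ᶠ T : FinPart 𝒜L in atTop, H i ∈ T.1 := by
  filter_upwards [eventually_subset_or_subset_compl h𝒜L.1 (h𝒜L.2.1 i)] with T hT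
  obtain ⟨x, hx⟩ := hH.1 i
  obtain ⟨A, hA, hxA⟩ := T.2.exists_mem x
  have hAi : A ⊆ H i := (hT A hA).resolve_right fun h => h hxA hx
  rwa [← h𝒜L.eq_cell_of_subset hH (T.2.1 hA) ⟨x, hxA⟩ hAi]

end FinPart

end FinitePartitions

section ExtremalJoint

variable [Nonempty Ω] {ι : Type*} {𝒜 𝒜L : Set (Set Ω)} {H : ι → Set Ω} {π : Set Ω → ℝ}
  {σ : Set Ω → ι → ℝ} {A C B : Set Ω} {T : Finset (Set Ω)}

/-- Point masses at these points make the mass of `A` as small and that of `C` as large as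
possible among the laws concentrated on `B`. -/
noncomputable def extremePoint (A C B : Set Ω) : Ω :=
  if h : (B ∩ C).Nonempty then h.some else if h : (B \ A).Nonempty then h.some else
    if h : B.Nonempty then h.some else Classical.arbitrary Ω

theorem extremePoint_mem (hB : B.Nonempty) : extremePoint A C B ∈ B := by
  unfold extremePoint
  split_ifs with h₁ h₂
  exacts [h₁.some_mem.1, h₂.some_mem.1, hB.some_mem]

theorem extremePoint_mem_right (h : (B ∩ C).Nonempty) : extremePoint A C B ∈ C := by
  rw [extremePoint, dif_pos h]
  exact h.some_mem.2

theorem subset_of_extremePoint_mem (hAC : Disjoint A C) (h : extremePoint A C B ∈ A) :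
    B ⊆ A := by
  unfold extremePoint at h
  split_ifs at h with h₁ h₂
  · exact absurd h₁.some_mem.2 (Set.disjoint_left.mp hAC h)
  · exact absurd h h₂.some_mem.2
  all_goals exact sdiff_eq_empty.mp (not_nonempty_iff_eq_empty.mp h₂)

noncomputable def partLaw (H : ι → Set Ω) (σ : Set Ω → ι → ℝ) (A C B : Set Ω) : Set Ω → ℝ :=
  if h : ∃ i, B = H i then fun G => σ G h.choose else fun G => G.indicator 1 (extremePoint A C B)

theorem partLaw_cell (hH : IsPartition H) (i : ι) : partLaw H σ A C (H i) = fun G => σ G i := by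
  have h : ∃ j, H i = H j := ⟨i, rfl⟩
  rw [partLaw, dif_pos h, ← hH.injective h.choose_spec]

theorem isFAP_partLaw (hσ : IsStrategy 𝒜 H σ) : IsFAP 𝒜 (partLaw H σ A C B) := by
  unfold partLaw
  split_ifs
  exacts [(hσ _).1, isFAP_indicator_one 𝒜 _]

theorem partLaw_self (hH : IsPartition H) (hσ : IsStrategy 𝒜 H σ) (hcell : ∀ i, H i ∈ 𝒜)
    (hB : B.Nonempty) : partLaw H σ A C B B = 1 := by
  by_cases h : ∃ i, B = H i
  · obtain ⟨i, rfl⟩ := h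
    simp [partLaw_cell hH, hσ.cell_eq_one hcell]
  · simp [partLaw, h, extremePoint_mem hB]

theorem mul_partLaw_le (hH : IsPartition H) {μ : Set Ω → ℝ}
    (hμ : IsJointExtension 𝒜 𝒜L H π σ μ) (h𝒜 : IsSetField 𝒜) (hL : 𝒜L ⊆ 𝒜) (hA : A ∈ 𝒜)
    (hAC : Disjoint A C) (hB : B ∈ 𝒜L) : π B * partLaw H σ A C B A ≤ μ (A ∩ B) := by
  by_cases h : ∃ i, B = H i
  · obtain ⟨i, rfl⟩ := h
    rw [partLaw_cell hH, hμ.inter_cell A hA i]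
  simp only [partLaw, h, dite_false]
  by_cases hp : extremePoint A C B ∈ A
  · rw [indicator_of_mem hp, Pi.one_apply, mul_one, ← hμ.eq_prior B hB,
      inter_eq_right.mpr (subset_of_extremePoint_mem hAC hp)]
  · rw [indicator_of_notMem hp, mul_zero]
    exact hμ.isFAP.nonneg (h𝒜.isSetAlgebra.inter_mem hA (hL hB))

theorem le_mul_partLaw (hH : IsPartition H) {μ : Set Ω → ℝ}
    (hμ : IsJointExtension 𝒜 𝒜L H π σ μ) (hπ : IsFAP 𝒜L π) (h𝒜 : IsSetField 𝒜) (hL : 𝒜L ⊆ 𝒜)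
    (hC : C ∈ 𝒜) (hB : B ∈ 𝒜L) :
    μ (C ∩ B) ≤ π B * partLaw H σ A C B C := by
  by_cases h : ∃ i, B = H i
  · obtain ⟨i, rfl⟩ := h
    rw [partLaw_cell hH, hμ.inter_cell C hC i]
  simp only [partLaw, h, dite_false]
  by_cases hBC : (B ∩ C).Nonempty
  · rw [indicator_of_mem (extremePoint_mem_right hBC), Pi.one_apply, mul_one,
      ← hμ.eq_prior B hB]
    exact hμ.isFAP.mono h𝒜 (h𝒜.isSetAlgebra.inter_mem hC (hL hB)) (hL hB) inter_subset_right
  · rw [inter_comm, not_nonempty_iff_eq_empty.mp hBC, hμ.isFAP.empty h𝒜]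
    exact mul_nonneg (hπ.nonneg hB) (indicator_nonneg (fun _ _ => zero_le_one) _)


noncomputable def partitionJoint (H : ι → Set Ω) (π : Set Ω → ℝ) (σ : Set Ω → ι → ℝ)
    (A C : Set Ω) (T : Finset (Set Ω)) (G : Set Ω) : ℝ :=
  ∑ B ∈ T, π B * partLaw H σ A C B G

theorem isFAP_partitionJoint (h𝒜L : IsFieldOver H 𝒜L) (hπ : IsFAP 𝒜L π)
    (hσ : IsStrategy 𝒜 H σ) (hT : IsFinPart 𝒜L T) : IsFAP 𝒜 (partitionJoint H π σ A C T) :=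
  isFAP_sum_mul (fun B hB => hπ.nonneg (hT.1 hB))
    (by simpa [hπ.2.1] using hT.sum_inter h𝒜L.1 subset_rfl hπ h𝒜L.1.1)
    fun _ _ => isFAP_partLaw hσ

theorem partitionJoint_eq_prior (hH : IsPartition H) (h𝒜L : IsFieldOver H 𝒜L)
    (hπ : IsFAP 𝒜L π) (h𝒜 : IsSetField 𝒜) (hL : 𝒜L ⊆ 𝒜) (hσ : IsStrategy 𝒜 H σ)
    (hT : IsFinPart 𝒜L T) {B' : Set Ω} (hB' : B' ∈ 𝒜L)
    (hrefine : ∀ B ∈ T, B ⊆ B' ∨ B ⊆ B'ᶜ) : partitionJoint H π σ A C T B' = π B' := by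
  rw [← hT.sum_inter h𝒜L.1 subset_rfl hπ hB']
  refine Finset.sum_congr rfl fun B hB => ?_
  have hcell i : H i ∈ 𝒜 := hL (h𝒜L.2.1 i)
  have hlaw := partLaw_self (A := A) (C := C) hH hσ hcell (hT.2.1 B hB)
  rcases hrefine B hB with hBB' | hBB'
  · rw [(isFAP_partLaw hσ).eq_one_of_subset h𝒜 (hL (hT.1 hB)) (hL hB') hlaw hBB',
      inter_eq_right.mpr hBB', mul_one]
  · have hdisj : Disjoint B' B := (subset_compl_iff_disjoint_right.mp hBB').symm
    rw [(isFAP_partLaw hσ).eq_zero_of_disjoint h𝒜 (hL (hT.1 hB)) (hL hB') hlaw hdisj,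
      hdisj.inter_eq, hπ.empty h𝒜L.1, mul_zero]

theorem partitionJoint_inter_cell (hH : IsPartition H) (h𝒜L : IsFieldOver H 𝒜L)
    (h𝒜 : IsSetField 𝒜) (hL : 𝒜L ⊆ 𝒜) (hσ : IsStrategy 𝒜 H σ) (hT : IsFinPart 𝒜L T) {i : ι}
    (hi : H i ∈ T) {G : Set Ω} (hG : G ∈ 𝒜) :
    partitionJoint H π σ A C T (G ∩ H i) = π (H i) * σ G i := by
  have hcell i : H i ∈ 𝒜 := hL (h𝒜L.2.1 i)
  rw [partitionJoint, Finset.sum_eq_single_of_mem _ hi]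
  · simp only [partLaw_cell hH, hσ.inter_cell hcell h𝒜 hG]
  intro B hB hBi
  rw [(isFAP_partLaw hσ).eq_zero_of_disjoint h𝒜 (hL (hT.1 hB))
    (h𝒜.isSetAlgebra.inter_mem hG (hcell i)) (partLaw_self hH hσ hcell (hT.2.1 B hB))
    ((hT.2.2.1 _ hi B hB (Ne.symm hBi)).mono_left inter_subset_right), mul_zero]

theorem partitionJoint_le (hH : IsPartition H) (h𝒜 : IsSetField 𝒜) (hL : 𝒜L ⊆ 𝒜)
    (hT : IsFinPart 𝒜L T) {μ : Set Ω → ℝ} (hμ : IsJointExtension 𝒜 𝒜L H π σ μ) (hA : A ∈ 𝒜)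
    (hAC : Disjoint A C) : partitionJoint H π σ A C T A ≤ μ A := by
  rw [← hT.sum_inter h𝒜 hL hμ.isFAP hA]
  exact Finset.sum_le_sum fun B hB => mul_partLaw_le hH hμ h𝒜 hL hA hAC (hT.1 hB)

theorem le_partitionJoint (hH : IsPartition H) (hπ : IsFAP 𝒜L π) (h𝒜 : IsSetField 𝒜)
    (hL : 𝒜L ⊆ 𝒜) (hT : IsFinPart 𝒜L T) {μ : Set Ω → ℝ} (hμ : IsJointExtension 𝒜 𝒜L H π σ μ)
    (hC : C ∈ 𝒜) :
    μ C ≤ partitionJoint H π σ A C T C := by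
  rw [← hT.sum_inter h𝒜 hL hμ.isFAP hC]
  exact Finset.sum_le_sum fun B hB => le_mul_partLaw hH hμ hπ h𝒜 hL hC (hT.1 hB)

theorem exists_isJointExtension_extremal (hH : IsPartition H) (h𝒜L : IsFieldOver H 𝒜L)
    (hπ : IsFAP 𝒜L π) (h𝒜 : IsSetField 𝒜) (hL : 𝒜L ⊆ 𝒜) (hσ : IsStrategy 𝒜 H σ) (hA : A ∈ 𝒜)
    (hC : C ∈ 𝒜) (hAC : Disjoint A C) :
    ∃ ν, IsJointExtension 𝒜 𝒜L H π σ ν ∧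
      ∀ μ, IsJointExtension 𝒜 𝒜L H π σ μ → ν A ≤ μ A ∧ μ C ≤ ν C := by
  have := FinPart.nonempty (𝒜L := 𝒜L) h𝒜L.1
  have := FinPart.isDirected (𝒜L := 𝒜L) h𝒜L.1
  let 𝓤 := Ultrafilter.of (atTop : Filter (FinPart 𝒜L))
  let μs (T : FinPart 𝒜L) := partitionJoint H π σ A C T.1
  have hμs (T : FinPart 𝒜L) : IsFAP 𝒜 (μs T) := isFAP_partitionJoint h𝒜L hπ hσ T.2
  let ν (G : Set Ω) := limUnder (𝓤 : Filter (FinPart 𝒜L)) fun T => μs T G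
  have hlim (G : Set Ω) (hG : G ∈ 𝒜) : Tendsto (fun T => μs T G) 𝓤 (𝓝 (ν G)) :=
    tendsto_limUnder_of_forall_mem 𝓤 isCompact_Icc fun T => ⟨(hμs T).nonneg hG, (hμs T).le_one hG⟩
  have hev (G : Set Ω) (hG : G ∈ 𝒜) (c : ℝ) (h : ∀ᶠ T in atTop, μs T G = c) : ν G = c :=
    tendsto_nhds_unique (hlim G hG)
      (tendsto_const_nhds.congr' ((h.filter_mono (Ultrafilter.of_le _)).mono fun _ h => h.symm))
  refine ⟨ν, ⟨IsFAP.of_tendsto hμs hlim h𝒜, fun B hB => ?_, fun G hG i => ?_⟩, fun μ hμ => ⟨?_, ?_⟩⟩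
  · exact hev B (hL hB) _ ((FinPart.eventually_subset_or_subset_compl h𝒜L.1 hB).mono fun T hT =>
      partitionJoint_eq_prior hH h𝒜L hπ h𝒜 hL hσ T.2 hB hT)
  · exact hev _ (h𝒜.isSetAlgebra.inter_mem hG (hL (h𝒜L.2.1 i))) _
      ((FinPart.eventually_cell_mem hH h𝒜L i).mono fun T hT =>
        partitionJoint_inter_cell hH h𝒜L h𝒜 hL hσ T.2 hT hG)
  · exact le_of_tendsto' (hlim A hA) fun T => partitionJoint_le hH h𝒜 hL T.2 hμ hA hAC
  · exact ge_of_tendsto' (hlim C hC) fun T => le_partitionJoint hH hπ h𝒜 hL T.2 hμ hC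

end ExtremalJoint

theorem div_add_le_div_add {a b x y : ℝ} (ha : 0 ≤ a) (hy : 0 ≤ y) (hax : a ≤ x) (hyb : y ≤ b)
    (hab : 0 < a + b) (hxy : 0 < x + y) : a / (a + b) ≤ x / (x + y) := by
  rw [div_le_div_iff₀ hab hxy]
  nlinarith [mul_le_mul_of_nonneg_right hax hy, mul_le_mul_of_nonneg_left hyb (ha.trans hax)]

theorem IsFCP.add_compl_inter {𝒜 : Set (Set Ω)} {P : Set Ω → Set Ω → ℝ} (hP : IsFCP 𝒜 P)
    (h𝒜 : IsSetField 𝒜) {F K : Set Ω} (hF : F ∈ 𝒜) (hK : K ∈ 𝒜) (hKne : K.Nonempty) :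
    P (F ∩ K) univ + P (Fᶜ ∩ K) univ = P K univ := by
  rw [← (hP.2.1 univ h𝒜.1 (hKne.mono (subset_univ K))).union (h𝒜.isSetAlgebra.inter_mem hF hK)
    (h𝒜.isSetAlgebra.inter_mem (h𝒜.2.1 F hF) hK)
    (disjoint_compl_right.mono inter_subset_left inter_subset_left),
    ← union_inter_distrib_right, union_compl_self, univ_inter]

theorem IsFCP.eq_div {𝒜 : Set (Set Ω)} {P : Set Ω → Set Ω → ℝ} (hP : IsFCP 𝒜 P)
    (h𝒜 : IsSetField 𝒜) {F K : Set Ω} (hF : F ∈ 𝒜) (hK : K ∈ 𝒜) (hKne : K.Nonempty)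
    (hpos : 0 < P K univ) :
    P F K = P (F ∩ K) univ / (P (F ∩ K) univ + P (Fᶜ ∩ K) univ) := by
  have huniv : (univ : Set Ω).Nonempty := hKne.mono (subset_univ K)
  have hchain := hP.2.2 K hK F hF univ h𝒜.1 huniv (by rwa [inter_univ])
  rw [inter_univ, inter_comm] at hchain
  rw [hP.add_compl_inter h𝒜 hF hK hKne, hchain, mul_div_cancel_left₀ _ hpos.ne']

section Envelopes

variable {Ps : Set (Set Ω → Set Ω → ℝ)} {P₀ : Set Ω → Set Ω → ℝ}

theorem lowEnv_eq_of_forall_le (h₀ : P₀ ∈ Ps) {X Y : Set Ω} (h : ∀ P ∈ Ps, P₀ X Y ≤ P X Y) :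
    lowEnv Ps X Y = P₀ X Y :=
  IsLeast.csInf_eq ⟨⟨P₀, h₀, rfl⟩, by rintro _ ⟨P, hP, rfl⟩; exact h P hP⟩

theorem upEnv_eq_of_forall_le (h₀ : P₀ ∈ Ps) {X Y : Set Ω} (h : ∀ P ∈ Ps, P X Y ≤ P₀ X Y) :
    upEnv Ps X Y = P₀ X Y :=
  IsGreatest.csSup_eq ⟨⟨P₀, h₀, rfl⟩, by rintro _ ⟨P, hP, rfl⟩; exact h P hP⟩

variable {F K : Set Ω} (h₀ : P₀ ∈ Ps) (hmin : ∀ P ∈ Ps, P₀ (F ∩ K) univ ≤ P (F ∩ K) univ)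
  (hmax : ∀ P ∈ Ps, P (Fᶜ ∩ K) univ ≤ P₀ (Fᶜ ∩ K) univ)
include h₀ hmin hmax

theorem Lj_eq : Lj Ps F K = P₀ (F ∩ K) univ :=
  IsLeast.csInf_eq ⟨⟨P₀, h₀, (upEnv_eq_of_forall_le h₀ hmax).symm, rfl⟩,
    by rintro _ ⟨P, hP, -, rfl⟩; exact hmin P hP⟩

theorem Uj_compl_eq : Uj Ps Fᶜ K = P₀ (Fᶜ ∩ K) univ := by
  rw [Uj, compl_compl]
  exact IsGreatest.csSup_eq ⟨⟨P₀, h₀, (lowEnv_eq_of_forall_le h₀ hmin).symm, rfl⟩,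
    by rintro _ ⟨P, hP, -, rfl⟩; exact hmax P hP⟩

theorem lowEnv_eq_div {𝒜 : Set (Set Ω)} (hPs : ∀ P ∈ Ps, IsFCP 𝒜 P) (h𝒜 : IsSetField 𝒜)
    (hF : F ∈ 𝒜) (hK : K ∈ 𝒜) (hKne : K.Nonempty) (hpos : 0 < lowEnv Ps K univ) :
    lowEnv Ps F K = P₀ (F ∩ K) univ / (P₀ (F ∩ K) univ + P₀ (Fᶜ ∩ K) univ) := by
  have huniv : (univ : Set Ω).Nonempty := hKne.mono (subset_univ K)
  have hjoint {P} (hP : P ∈ Ps) := (hPs P hP).2.1 univ h𝒜.1 huniv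
  have hKpos {P} (hP : P ∈ Ps) : 0 < P K univ := hpos.trans_le <|
    csInf_le ⟨0, by rintro _ ⟨P, hP, rfl⟩; exact (hjoint hP).nonneg hK⟩ ⟨P, hP, rfl⟩
  rw [← (hPs P₀ h₀).eq_div h𝒜 hF hK hKne (hKpos h₀)]
  refine lowEnv_eq_of_forall_le h₀ fun P hP => ?_
  have hFK := h𝒜.isSetAlgebra.inter_mem hF hK
  have hFcK := h𝒜.isSetAlgebra.inter_mem (h𝒜.2.1 F hF) hK
  rw [(hPs P₀ h₀).eq_div h𝒜 hF hK hKne (hKpos h₀), (hPs P hP).eq_div h𝒜 hF hK hKne (hKpos hP)]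
  refine div_add_le_div_add ((hjoint h₀).nonneg hFK) ((hjoint hP).nonneg hFcK) (hmin P hP)
    (hmax P hP) ?_ ?_
  · rw [(hPs P₀ h₀).add_compl_inter h𝒜 hF hK hKne]; exact hKpos h₀
  · rw [(hPs P hP).add_compl_inter h𝒜 hF hK hKne]; exact hKpos hP

end Envelopes

theorem statement3_general {Ω ι κ : Type*} [Nonempty Ω] (H : ι → Set Ω) (E : κ → Set Ω)
    (𝒜L 𝒜E 𝒜 : Set (Set Ω))
    (hH : IsPartition H)
    (h𝒜L : IsFieldOver H 𝒜L)
    (h𝒜 : IsJointField H E 𝒜L 𝒜E 𝒜)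
    (π : Set Ω → ℝ) (hπ : IsFAP 𝒜L π)
    (σ : Set Ω → ι → ℝ) (hσ : IsStrategy 𝒜 H σ)
    (F K : Set Ω) (hF : F ∈ 𝒜) (hK : K ∈ 𝒜) (hKne : K.Nonempty)
    (hpos : 0 < lowEnv (FCPSet 𝒜 𝒜L H π σ) K Set.univ) :
    lowEnv (FCPSet 𝒜 𝒜L H π σ) F K =
      min
        (lowEnv (FCPSet 𝒜 𝒜L H π σ) (F ∩ K) Set.univ /
          (lowEnv (FCPSet 𝒜 𝒜L H π σ) (F ∩ K) Set.univ + Uj (FCPSet 𝒜 𝒜L H π σ) Fᶜ K))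
        (Lj (FCPSet 𝒜 𝒜L H π σ) F K /
          (Lj (FCPSet 𝒜 𝒜L H π σ) F K + upEnv (FCPSet 𝒜 𝒜L H π σ) (Fᶜ ∩ K) Set.univ)) := by
  obtain ⟨h𝒜, hL, -⟩ := h𝒜
  obtain ⟨ν, hν, hextremal⟩ := exists_isJointExtension_extremal hH h𝒜L hπ h𝒜 hL hσ
    (h𝒜.isSetAlgebra.inter_mem hF hK) (h𝒜.isSetAlgebra.inter_mem (h𝒜.2.1 F hF) hK)
    (disjoint_compl_right.mono inter_subset_left inter_subset_left)
  obtain ⟨P₀, hP₀, hP₀ν⟩ := exists_mem_FCPSet_of_isJointExtension hH h𝒜L h𝒜 hL hσ hν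
  have hjoint {P} (hP : P ∈ FCPSet 𝒜 𝒜L H π σ) :=
    hextremal _ (isJointExtension_of_mem_FCPSet hH h𝒜L h𝒜 hL hP)
  have hmin : ∀ P ∈ FCPSet 𝒜 𝒜L H π σ, P₀ (F ∩ K) univ ≤ P (F ∩ K) univ :=
    fun P hP => hP₀ν _ ▸ (hjoint hP).1
  have hmax : ∀ P ∈ FCPSet 𝒜 𝒜L H π σ, P (Fᶜ ∩ K) univ ≤ P₀ (Fᶜ ∩ K) univ :=
    fun P hP => hP₀ν _ ▸ (hjoint hP).2
  rw [lowEnv_eq_of_forall_le hP₀ hmin, Uj_compl_eq hP₀ hmin hmax, Lj_eq hP₀ hmin hmax,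
    upEnv_eq_of_forall_le hP₀ hmax, min_self]
  exact lowEnv_eq_div hP₀ hmin hmax (fun P hP => hP.1) h𝒜 hF hK hKne hpos

/-- closed form of `P_*(F|K)` when `P^j_*(K) > 0`. -/
theorem statement3 {Ω ι κ : Type*} [Nonempty Ω] (H : ι → Set Ω) (E : κ → Set Ω)
    (𝒜L 𝒜E 𝒜 : Set (Set Ω))
    (hH : IsPartition H) (hE : IsPartition E)
    (h𝒜L : IsFieldOver H 𝒜L) (h𝒜E : IsFieldOver E 𝒜E)
    (h𝒜 : IsJointField H E 𝒜L 𝒜E 𝒜)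
    (π : Set Ω → ℝ) (hπ : IsFAP 𝒜L π)
    (σ : Set Ω → ι → ℝ) (hσ : IsStrategy 𝒜 H σ)
    (F K : Set Ω) (hF : F ∈ 𝒜) (hK : K ∈ 𝒜) (hKne : K.Nonempty)
    (hFK : F ∩ K ≠ K)
    (hpos : 0 < lowEnv (FCPSet 𝒜 𝒜L H π σ) K Set.univ) :
    lowEnv (FCPSet 𝒜 𝒜L H π σ) F K =
      min
        (lowEnv (FCPSet 𝒜 𝒜L H π σ) (F ∩ K) Set.univ /
          (lowEnv (FCPSet 𝒜 𝒜L H π σ) (F ∩ K) Set.univ + Uj (FCPSet 𝒜 𝒜L H π σ) Fᶜ K))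
        (Lj (FCPSet 𝒜 𝒜L H π σ) F K /
          (Lj (FCPSet 𝒜 𝒜L H π σ) F K + upEnv (FCPSet 𝒜 𝒜L H π σ) (Fᶜ ∩ K) Set.univ)) :=
  statement3_general H E 𝒜L 𝒜E 𝒜 hH h𝒜L h𝒜 π hπ σ hσ F K hF hK hKne hpos
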